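/- (Sparse generator matrices fail) Let X be a finite field and A_{n×m_n} random n×m_n matrices over X with average density D(A_{n×m_n}) = (1/(n m_n)) E[∑_{i,j} 1{A(i,j) ≠ 0}]. If liminf_n D(A_{n×m_n}) < 1 − 1/|X|, then the sequence of random linear codes F_n(x) = x·A_{n×m_n} is not asymptotically good (with δ = 0). -/

import Mathlib

open Finset Filter

open scoped Classical

noncomputable def empDist {X : Type*} [Fintype X] {n : ℕ} (x : Fin n → X) : X → ℝ :=
  fun a => ((univ.filter fun i => x i = a).card : ℝ) / n

noncomputable def specS {X : Type*} [Fintype X] {n : ℕ}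
    (A : Finset (Fin n → X)) (P : X → ℝ) : ℝ :=
  ((A.filter fun x => empDist x = P).card : ℝ) / (A.card : ℝ)

noncomputable def jointSpec {X Y : Type*} [Fintype X] [Fintype Y] {n m : ℕ}
    (f : (Fin n → X) → (Fin m → Y)) (P : X → ℝ) (Q : Y → ℝ) : ℝ :=
  ((univ.filter fun x : Fin n → X => empDist x = P ∧ empDist (f x) = Q).card : ℝ) /
    ((Fintype.card X : ℝ) ^ n)

noncomputable def fullJointSpec (X Y : Type*) [Fintype X] [Fintype Y] (n m : ℕ)
    (P : X → ℝ) (Q : Y → ℝ) : ℝ :=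
  specS (univ : Finset (Fin n → X)) P * specS (univ : Finset (Fin m → Y)) Q

noncomputable def alphaE {X Y : Type*} [Fintype X] [Fintype Y] {n m : ℕ} {Ω : Type*}
    [Fintype Ω] (μ : Ω → ℝ) (F : Ω → (Fin n → X) → (Fin m → Y))
    (P : X → ℝ) (Q : Y → ℝ) : ℝ :=
  (∑ ω, μ ω * jointSpec (F ω) P Q) / fullJointSpec X Y n m P Q

def permAct {X : Type*} {n : ℕ} (σ : Equiv.Perm (Fin n)) (x : Fin n → X) : Fin n → X :=
  fun i => x (σ.symm i)

noncomputable def entH {X : Type*} [Fintype X] (P : X → ℝ) : ℝ :=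
  ∑ a, -(P a * Real.log (P a))

noncomputable def binEnt (x : ℝ) : ℝ := -(x * Real.log x) - (1 - x) * Real.log (1 - x)

/-!
Fix `1 / q < t < 1 - c`, where `c` bounds the density infinitely often. By Markov's inequality, in
expectation a fraction at least `1 - c - t` of the rows of `A` have at least `t m` zeros. The unit
vectors `e_i` form a single type class and `e_i A` is the `i`-th row of `A`, so summing the goodness
bound `α (P_{e_i}, Q) ≤ exp (n ε)` over the type classes `Q` of words with at least `t m` zeros
bounds that expected fraction by `exp (n ε)` times the uniform probability of such a word. By
exponential tilting this probability is at most `exp (-m (log q - H_q (1 - t)))`, and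
`H_q (1 - t) < log q`. Since `n / m` stays bounded, a small `ε` makes the bound tend to `0`.
-/

section

open Real

section EmpDist

variable {X : Type*} [Fintype X] {n : ℕ}

noncomputable def typeClass (x : Fin n → X) : Finset (Fin n → X) :=
  univ.filter fun z => empDist z = empDist x

lemma card_filter_eq_of_empDist_eq {x y : Fin n → X} (h : empDist x = empDist y) (a : X) :
    #{i | x i = a} = #{i | y i = a} := by
  rcases n.eq_zero_or_pos with rfl | hn
  · simp [Finset.univ_eq_empty]
  · have := congrFun h a
    unfold empDist at this
    rw [div_left_inj' (by positivity)] at this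
    exact_mod_cast this

lemma card_filter_comp_eq_of_empDist_eq {x y : Fin n → X} (h : empDist x = empDist y)
    (p : X → Prop) [DecidablePred p] : #{i | p (x i)} = #{i | p (y i)} := by
  have fiberwise (z : Fin n → X) : #{i | p (z i)} = ∑ a with p a, #{i | z i = a} := by
    rw [card_eq_sum_card_fiberwise (f := z) (t := univ.filter p)
      (fun i hi => by simpa using hi)]
    refine sum_congr rfl fun a ha => congrArg card ?_
    ext i
    simp only [mem_filter, mem_univ, true_and] at ha ⊢
    exact ⟨fun h => h.2, fun h => ⟨h ▸ ha, h⟩⟩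
  simp only [fiberwise, card_filter_eq_of_empDist_eq h]

lemma empDist_comp_perm (x : Fin n → X) (σ : Equiv.Perm (Fin n)) :
    empDist (x ∘ σ) = empDist x := by
  funext a
  unfold empDist
  congr 2
  exact card_equiv σ (by simp)

lemma mem_typeClass {x z : Fin n → X} : z ∈ typeClass x ↔ empDist z = empDist x := by
  simp [typeClass]

lemma typeClass_nonempty (x : Fin n → X) : (typeClass x).Nonempty :=
  ⟨x, mem_typeClass.2 rfl⟩

end EmpDist

section Single

variable {K : Type*} [Zero K] [One K] {n : ℕ}

lemma single_one_injective [NeZero (1 : K)] :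
    Function.Injective fun i : Fin n => (Pi.single i (1 : K)) := by
  intro i j h
  by_contra hij
  simpa [Pi.single_apply, hij] using congrFun h i

lemma card_filter_single_one (i₀ : Fin n) (p : K → Prop) [DecidablePred p] (hp0 : ¬ p 0)
    (hp1 : p 1) :
    #{j | p ((Pi.single i₀ (1 : K) : Fin n → K) j)} = 1 := by
  rw [card_eq_one]
  refine ⟨i₀, ?_⟩
  ext j
  by_cases h : j = i₀ <;> simp [Pi.single_apply, h, hp0, hp1]

lemma typeClass_single [Fintype K] [NeZero (1 : K)] (i₀ : Fin n) :
    typeClass (Pi.single i₀ (1 : K)) = univ.map ⟨_, single_one_injective⟩ := by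
  ext x
  simp only [mem_typeClass, Finset.mem_map, mem_univ, true_and, Function.Embedding.coeFn_mk]
  constructor
  · intro hx
    have hone : #{j | x j = 1} = 1 :=
      (card_filter_comp_eq_of_empDist_eq hx (· = 1)).trans
        (card_filter_single_one i₀ (fun a : K => a = 1) zero_ne_one rfl)
    have hsupp : #{j | x j ≠ 0} = 1 :=
      (card_filter_comp_eq_of_empDist_eq hx (· ≠ 0)).trans
        (card_filter_single_one i₀ (fun a : K => a ≠ 0) (not_not.2 rfl) one_ne_zero)
    obtain ⟨i, hi⟩ := card_eq_one.1 hone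
    have hsame : (univ.filter fun j => x j = 1) = univ.filter fun j => x j ≠ 0 :=
      eq_of_subset_of_card_le (fun j => by simp +contextual) (by rw [hone, hsupp])
    refine ⟨i, funext fun j => ?_⟩
    have h1 : x j = 1 ↔ j = i := by simpa using congrArg (j ∈ ·) hi
    have h0 : x j ≠ 0 ↔ j = i := by simpa [hsame] using congrArg (j ∈ ·) hi
    by_cases hji : j = i
    · subst hji
      rw [Pi.single_eq_same]
      exact (h1.2 rfl).symm
    · rw [Pi.single_eq_of_ne hji]
      exact (not_not.1 (h0.not.2 hji)).symm
  · rintro ⟨i, rfl⟩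
    rw [← empDist_comp_perm _ (Equiv.swap i₀ i)]
    congr 1
    funext j
    simp [Pi.single_apply, Equiv.swap_apply_eq_iff]

end Single

lemma sum_ite_inv_card_fiber {α β : Type*} [Fintype α] [DecidableEq α] [DecidableEq β]
    (τ : α → β) (Z : Finset α) (hZ : ∀ a b, τ a = τ b → a ∈ Z → b ∈ Z) (a₀ : α) :
    ∑ a ∈ Z, (if τ a₀ = τ a then (#{b | τ b = τ a} : ℝ)⁻¹ else 0) = if a₀ ∈ Z then 1 else 0 := by
  split_ifs with ha₀
  · have hfiber : Z.filter (fun a => τ a₀ = τ a) = univ.filter fun b => τ b = τ a₀ := by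
      ext b
      simp only [mem_filter, mem_univ, true_and]
      exact ⟨fun h => h.2.symm, fun h => ⟨hZ a₀ b h.symm ha₀, h.symm⟩⟩
    rw [← sum_filter, hfiber, sum_congr rfl fun b hb => by rw [(mem_filter.1 hb).2],
      sum_const, nsmul_eq_mul, mul_inv_cancel₀]
    exact Nat.cast_ne_zero.2 (card_ne_zero.2 ⟨a₀, by simp⟩)
  · exact sum_eq_zero fun a ha => if_neg fun h => ha₀ (hZ a a₀ h.symm ha)

section Averaging

variable {X Y : Type*} [Fintype X] [Fintype Y] {n m : ℕ} {Ω : Type*} [Fintype Ω]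

lemma card_pow_pos (x : Fin n → X) : (0 : ℝ) < (Fintype.card X : ℝ) ^ n := by
  have := Fintype.card_pos_iff.2 ⟨x⟩
  rw [Fintype.card_fun, Fintype.card_fin] at this
  exact_mod_cast this

lemma alphaE_empDist (μ : Ω → ℝ) (f : Ω → (Fin n → X) → (Fin m → Y))
    (x : Fin n → X) (y : Fin m → Y) :
    alphaE μ f (empDist x) (empDist y) =
      (∑ ω, μ ω * #{z | empDist z = empDist x ∧ empDist (f ω z) = empDist y}) *
        (Fintype.card Y : ℝ) ^ m / (#(typeClass x) * #(typeClass y)) := by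
  have hX := card_pow_pos x
  have hx : (0 : ℝ) < #(typeClass x) := by exact_mod_cast (typeClass_nonempty x).card_pos
  have hy : (0 : ℝ) < #(typeClass y) := by exact_mod_cast (typeClass_nonempty y).card_pos
  simp only [alphaE, jointSpec, fullJointSpec, specS, card_univ, Fintype.card_fun,
    Fintype.card_fin, typeClass, mul_div_assoc', ← sum_div, Nat.cast_pow] at hx hy ⊢
  field_simp


lemma card_filter_typeClass_eq_sum (g : (Fin n → X) → (Fin m → Y)) (x₀ : Fin n → X)
    (Z : Finset (Fin m → Y)) (hZ : ∀ y z, empDist y = empDist z → y ∈ Z → z ∈ Z) :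
    (#{x ∈ typeClass x₀ | g x ∈ Z} : ℝ) =
      ∑ y ∈ Z, (#{x | empDist x = empDist x₀ ∧ empDist (g x) = empDist y} : ℝ) /
        #(typeClass y) := by
  rw [natCast_card_filter]
  trans ∑ x ∈ typeClass x₀, ∑ y ∈ Z,
    if empDist (g x) = empDist y then (#(typeClass y) : ℝ)⁻¹ else 0
  · refine sum_congr rfl fun x _ => ?_
    exact (sum_ite_inv_card_fiber empDist Z hZ (g x)).symm
  rw [sum_comm]
  refine sum_congr rfl fun y _ => ?_
  rw [div_eq_mul_inv, natCast_card_filter, sum_mul, typeClass, sum_filter]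
  refine sum_congr rfl fun x _ => ?_
  split_ifs <;> simp_all

theorem sum_mul_card_filter_typeClass_le (μ : Ω → ℝ) (f : Ω → (Fin n → X) → (Fin m → Y))
    (x₀ : Fin n → X) (Z : Finset (Fin m → Y))
    (hZ : ∀ y z, empDist y = empDist z → y ∈ Z → z ∈ Z) (B : ℝ)
    (hB : ∀ y ∈ Z, alphaE μ f (empDist x₀) (empDist y) ≤ B) :
    ∑ ω, μ ω * #{x ∈ typeClass x₀ | f ω x ∈ Z} ≤
      B * #(typeClass x₀) * #Z / (Fintype.card Y : ℝ) ^ m := by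
  have hx : (0 : ℝ) < #(typeClass x₀) := by exact_mod_cast (typeClass_nonempty x₀).card_pos
  calc ∑ ω, μ ω * (#{x ∈ typeClass x₀ | f ω x ∈ Z} : ℝ)
      = ∑ y ∈ Z, alphaE μ f (empDist x₀) (empDist y) * #(typeClass x₀) /
          (Fintype.card Y : ℝ) ^ m := by
        simp_rw [card_filter_typeClass_eq_sum _ x₀ Z hZ, mul_sum]
        rw [sum_comm]
        refine sum_congr rfl fun y _ => ?_
        have hy : (0 : ℝ) < #(typeClass y) := by exact_mod_cast (typeClass_nonempty y).card_pos
        have hY := card_pow_pos y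
        rw [alphaE_empDist]
        simp only [← mul_div_assoc, ← sum_div]
        field_simp
    _ ≤ ∑ _y ∈ Z, B * #(typeClass x₀) / (Fintype.card Y : ℝ) ^ m := by
        gcongr with y hy
        exact hB y hy
    _ = B * #(typeClass x₀) * #Z / (Fintype.card Y : ℝ) ^ m := by
        rw [sum_const, nsmul_eq_mul]
        ring

end Averaging

lemma qaryEntropy_one_sub_eq {q : ℕ} (hq : 2 ≤ q) {t : ℝ} (ht1 : t < 1) :
    qaryEntropy q (1 - t) = -(t * log t + (1 - t) * log ((1 - t) / (q - 1))) := by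
  have hq1 : (1 : ℝ) < q := by exact_mod_cast hq
  rw [qaryEntropy, binEntropy_one_sub, binEntropy, log_div (by linarith) (by linarith),
    log_inv, log_inv]
  push_cast
  ring

lemma qaryEntropy_one_sub_lt_log {q : ℕ} (hq : 2 ≤ q) {t : ℝ} (ht : 1 / q < t) (ht1 : t < 1) :
    qaryEntropy q (1 - t) < log q := by
  have hq1 : (1 : ℝ) < q := by exact_mod_cast hq
  have hmax : qaryEntropy q (1 - 1 / q) = log q := by
    have hq1' : (q : ℝ) - 1 ≠ 0 := by linarith
    rw [qaryEntropy_one_sub_eq hq (by rw [div_lt_one] <;> linarith),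
      show (1 - 1 / q) / (q - 1 : ℝ) = 1 / q by field_simp, one_div, log_inv]
    ring
  rw [← hmax]
  exact qaryEntropy_strictMonoOn hq ⟨by linarith, by linarith⟩
    ⟨by rw [sub_nonneg, div_le_one] <;> linarith, le_rfl⟩ (by linarith)

lemma exp_le_pow_mul_pow {s t : ℝ} (hs : 0 < s) (hst : s ≤ t) {m k : ℕ} (hk : k ≤ m)
    (htk : t * m ≤ k) : exp (m * (t * log t + (1 - t) * log s)) ≤ t ^ k * s ^ (m - k) := by
  have ht : 0 < t := hs.trans_le hst
  rw [← exp_log (pow_pos ht k), ← exp_log (pow_pos hs (m - k)), ← exp_add, exp_le_exp,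
    log_pow, log_pow, Nat.cast_sub hk]
  have := log_le_log hs hst
  nlinarith

theorem card_many_zeros_le_exp_qaryEntropy {K : Type*} [Fintype K] [Zero K] {t : ℝ}
    (ht : 1 / Fintype.card K < t) (ht1 : t < 1) (m : ℕ) :
    (#{y : Fin m → K | t * m ≤ #{j | y j = 0}} : ℝ) ≤
      exp (m * qaryEntropy (Fintype.card K) (1 - t)) := by
  set q := Fintype.card K
  have hq : 2 ≤ q := by
    have : 0 < q := Fintype.card_pos
    by_contra! h
    have h1 : q = 1 := by omega
    rw [h1] at ht
    norm_num at ht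
    linarith
  have hq1 : (1 : ℝ) < q := by exact_mod_cast hq
  set s := (1 - t) / (q - 1)
  have hs : 0 < s := div_pos (by linarith) (by linarith)
  have hst : s ≤ t := by
    rw [div_le_iff₀ (by linarith)]
    rw [div_lt_iff₀ (by linarith)] at ht
    linarith
  -- Tilted letter distribution: under `w ^ m`, every word with at least `t m` zeros has mass
  -- at least `exp (-m H_q (1 - t))`, while the total mass is `1`.
  set w : K → ℝ := fun z => if z = 0 then t else s
  have hw : ∑ z, w z = 1 := by
    rw [Fintype.sum_eq_add_sum_compl 0, sum_congr rfl fun z hz => if_neg (by simpa using hz),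
      sum_const, card_compl, card_singleton, nsmul_eq_mul, Nat.cast_sub Fintype.card_pos]
    simp only [w, if_pos rfl, s]
    have : (q : ℝ) - 1 ≠ 0 := by linarith
    push_cast
    field_simp
    ring
  have hweight (y : Fin m → K) (hy : t * m ≤ #{j | y j = 0}) :
      exp (-(m * qaryEntropy q (1 - t))) ≤ ∏ j, w (y j) := by
    rw [qaryEntropy_one_sub_eq hq ht1, neg_mul_eq_mul_neg, neg_neg, prod_ite, prod_const,
      prod_const, filter_not, card_sdiff_of_subset (filter_subset _ _), card_univ,
      Fintype.card_fin]
    exact exp_le_pow_mul_pow hs hst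
      (by simpa using card_filter_le (univ : Finset (Fin m)) (fun j => y j = 0)) hy
  have hw0 (z : K) : 0 ≤ w z := by
    simp only [w]
    split_ifs <;> linarith
  have hbound : (#{y : Fin m → K | t * m ≤ #{j | y j = 0}} : ℝ) *
      exp (-(m * qaryEntropy q (1 - t))) ≤ 1 :=
    calc _ = ∑ y : Fin m → K with t * m ≤ #{j | y j = 0},
            exp (-(m * qaryEntropy q (1 - t))) := by
          rw [sum_const, nsmul_eq_mul]
      _ ≤ ∑ y : Fin m → K with t * m ≤ #{j | y j = 0}, ∏ j, w (y j) :=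
          sum_le_sum fun y hy => hweight y (mem_filter.1 hy).2
      _ ≤ ∑ y : Fin m → K, ∏ j, w (y j) :=
          sum_le_sum_of_subset_of_nonneg (subset_univ _) fun _ _ _ =>
            prod_nonneg fun _ _ => hw0 _
      _ = 1 := by rw [← Fintype.sum_pow, hw, one_pow]
  rwa [exp_neg, ← div_eq_mul_inv, div_le_one (exp_pos _)] at hbound

section Sparse

variable {K : Type*} [Zero K] {n m : ℕ}

lemma card_zero_entries_le (M : Matrix (Fin n) (Fin m) K) {t : ℝ} (ht : 0 ≤ t) :
    (#{p : Fin n × Fin m | M p.1 p.2 = 0} : ℝ) ≤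
      m * #{i | t * m ≤ #{j | M i j = 0}} + n * (t * m) := by
  have hrows : #{p : Fin n × Fin m | M p.1 p.2 = 0} = ∑ i, #{j | M i j = 0} := by
    simp only [card_filter, Fintype.sum_prod_type]
  have hrow (i : Fin n) : (#{j | M i j = 0} : ℝ) ≤
      m * (if t * m ≤ #{j | M i j = 0} then 1 else 0) + t * m := by
    split_ifs with h
    · have : (#{j | M i j = 0} : ℝ) ≤ m := by
        exact_mod_cast (card_filter_le _ _).trans_eq (by simp)
      linarith [mul_nonneg ht (Nat.cast_nonneg m)]
    · linarith
  rw [hrows, natCast_card_filter, mul_sum]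
  push_cast
  calc ∑ i, (#{j | M i j = 0} : ℝ)
      ≤ ∑ i, (m * (if t * m ≤ #{j | M i j = 0} then 1 else 0) + t * m) :=
        sum_le_sum fun i _ => hrow i
    _ = _ := by simp [sum_add_distrib]

theorem one_sub_sub_mul_le_sum_card_rows_many_zeros {Ω : Type*} [Fintype Ω] (hm : 0 < m)
    (μ : Ω → ℝ) (hμ0 : ∀ ω, 0 ≤ μ ω) (hμ1 : ∑ ω, μ ω = 1)
    (A : Ω → Matrix (Fin n) (Fin m) K) {c t : ℝ} (ht : 0 ≤ t)
    (hc : ∑ ω, μ ω * #{p : Fin n × Fin m | A ω p.1 p.2 ≠ 0} ≤ c * (n * m)) :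
    (1 - c - t) * n ≤ ∑ ω, μ ω * #{i | t * m ≤ #{j | A ω i j = 0}} := by
  have hm' : (0 : ℝ) < m := by exact_mod_cast hm
  have hsplit (ω : Ω) : (#{p : Fin n × Fin m | A ω p.1 p.2 ≠ 0} : ℝ) =
      n * m - #{p : Fin n × Fin m | A ω p.1 p.2 = 0} := by
    rw [eq_sub_iff_add_eq, ← Nat.cast_add, add_comm, card_filter_add_card_filter_not]
    simp
  have hexpect : ∑ ω, μ ω * (n * m - #{p : Fin n × Fin m | A ω p.1 p.2 ≠ 0} - n * (t * m)) =
      n * m - ∑ ω, μ ω * #{p : Fin n × Fin m | A ω p.1 p.2 ≠ 0} - n * (t * m) := by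
    simp only [mul_sub, sum_sub_distrib, ← sum_mul, hμ1, one_mul]
  have hmul : (1 - c - t) * n * m ≤ (∑ ω, μ ω * #{i | t * m ≤ #{j | A ω i j = 0}}) * m :=
    calc (1 - c - t) * n * m ≤ n * m - ∑ ω, μ ω * #{p : Fin n × Fin m | A ω p.1 p.2 ≠ 0} -
          n * (t * m) := by linarith
      _ ≤ ∑ ω, μ ω * (m * #{i | t * m ≤ #{j | A ω i j = 0}}) := by
          rw [← hexpect]
          refine sum_le_sum fun ω _ => mul_le_mul_of_nonneg_left ?_ (hμ0 ω)
          linarith [hsplit ω, card_zero_entries_le (A ω) ht]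
      _ = (∑ ω, μ ω * #{i | t * m ≤ #{j | A ω i j = 0}}) * m := by
          rw [sum_mul]
          exact sum_congr rfl fun ω _ => by ring
  exact le_of_mul_le_mul_right hmul hm'

end Sparse

theorem one_sub_sub_le_of_alphaE_le {K : Type*} [Fintype K] [NonAssocSemiring K] [Nontrivial K]
    {n m : ℕ} (hm : 0 < m) {Ω : Type*} [Fintype Ω]
    (μ : Ω → ℝ) (hμ0 : ∀ ω, 0 ≤ μ ω) (hμ1 : ∑ ω, μ ω = 1)
    (A : Ω → Matrix (Fin n) (Fin m) K) {c t : ℝ} (ht : 1 / Fintype.card K < t) (ht1 : t < 1)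
    (hc : ∑ ω, μ ω * #{p : Fin n × Fin m | A ω p.1 p.2 ≠ 0} ≤ c * (n * m))
    (i₀ : Fin n) {B : ℝ} (hB0 : 0 ≤ B)
    (hB : ∀ y : Fin m → K, alphaE μ (fun ω x => Matrix.vecMul x (A ω))
      (empDist (Pi.single i₀ 1)) (empDist y) ≤ B) :
    1 - c - t ≤
      B * exp (-(m * (log (Fintype.card K) - qaryEntropy (Fintype.card K) (1 - t)))) := by
  set Z : Finset (Fin m → K) := univ.filter fun y => t * m ≤ #{j | y j = 0}
  have hZ (y z : Fin m → K) (h : empDist y = empDist z) (hy : y ∈ Z) : z ∈ Z := by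
    simpa [Z, card_filter_comp_eq_of_empDist_eq h (· = 0)] using hy
  have hrows (ω : Ω) : #{x ∈ typeClass (Pi.single i₀ (1 : K)) | Matrix.vecMul x (A ω) ∈ Z} =
      #{i | t * m ≤ #{j | A ω i j = 0}} := by
    rw [typeClass_single, filter_map, card_map]
    simp [Z]
  have hn : (0 : ℝ) < n := by exact_mod_cast i₀.pos
  have ht0 : 0 ≤ t := (one_div_nonneg.2 (Nat.cast_nonneg _)).trans ht.le
  have hmarkov := one_sub_sub_mul_le_sum_card_rows_many_zeros hm μ hμ0 hμ1 A ht0 hc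
  have havg := sum_mul_card_filter_typeClass_le μ (fun ω x => Matrix.vecMul x (A ω))
    (Pi.single i₀ 1) Z hZ B fun y _ => hB y
  simp only [hrows] at havg
  rw [typeClass_single, card_map, card_univ, Fintype.card_fin] at havg
  refine le_of_mul_le_mul_right ?_ hn
  calc (1 - c - t) * n ≤ B * n * #Z / (Fintype.card K : ℝ) ^ m := hmarkov.trans havg
    _ ≤ B * n * exp (m * qaryEntropy (Fintype.card K) (1 - t)) / (Fintype.card K : ℝ) ^ m := by
        gcongr
        exact card_many_zeros_le_exp_qaryEntropy ht ht1 m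
    _ = _ := by
        rw [mul_sub, neg_sub, exp_sub, exp_nat_mul (log (Fintype.card K : ℝ)) m,
          exp_log (by positivity)]
        ring

lemma exp_mul_mul_exp_neg_le {n m R γ : ℝ} (hm : 0 < m) (hR : 0 < R) (hγ : 0 ≤ γ)
    (hnm : n / m ≤ R) : exp (n * (γ / (2 * R))) * exp (-(m * γ)) ≤ exp (-(n * (γ / (2 * R)))) := by
  rw [← exp_add, exp_le_exp]
  have hn : n / R ≤ m := by
    rw [div_le_iff₀ hm] at hnm
    rwa [div_le_iff₀ hR, mul_comm]
  have : n * (γ / (2 * R)) * 2 = n / R * γ := by field_simp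
  nlinarith [mul_le_mul_of_nonneg_right hn hγ]

end

theorem stmt18 {K : Type*} [Fintype K] [Field K]
    (m : ℕ → ℕ) (hm : ∀ n, 0 < m n)
    (Ω : ℕ → Type*) [∀ n, Fintype (Ω n)] (μ : ∀ n, Ω n → ℝ)
    (hμ0 : ∀ n ω, 0 ≤ μ n ω) (hμ1 : ∀ n, ∑ ω, μ n ω = 1)
    (A : ∀ n, Ω n → Matrix (Fin n) (Fin (m n)) K)
    (Rbar : ℝ)
    (hR : ∀ ε > (0 : ℝ), ∀ᶠ n : ℕ in atTop, (n : ℝ) / (m n : ℝ) ≤ Rbar + ε)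
    (hsparse : ∃ c, c < 1 - 1 / (Fintype.card K : ℝ) ∧
      ∃ᶠ n : ℕ in atTop, (∑ ω, μ n ω *
          ((univ.filter fun p : Fin n × Fin (m n) => A n ω p.1 p.2 ≠ 0).card : ℝ)) /
        ((n : ℝ) * (m n : ℝ)) ≤ c) :
    ¬ (∀ ε > (0 : ℝ), ∀ᶠ n : ℕ in atTop, ∀ x : Fin n → K, x ≠ 0 → ∀ y : Fin (m n) → K,
        alphaE (μ n) (fun ω (x : Fin n → K) => Matrix.vecMul x (A n ω))
            (empDist x) (empDist y)
          ≤ Real.exp (n * ε)) := by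
  intro hgood
  obtain ⟨c, hc, hfreq⟩ := hsparse
  set q := Fintype.card K
  have hq : 1 / (q : ℝ) < 1 := by
    rw [div_lt_one (by positivity)]
    exact_mod_cast Fintype.one_lt_card
  obtain ⟨t, ht, htc⟩ := exists_between (lt_min hq (by linarith : 1 / (q : ℝ) < 1 - c))
  have ht1 : t < 1 := htc.trans_le (min_le_left _ _)
  set γ := Real.log q - Real.qaryEntropy q (1 - t)
  have hγ : 0 < γ := sub_pos.2 (qaryEntropy_one_sub_lt_log Fintype.one_lt_card ht ht1)
  set R := max (Rbar + 1) 1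
  have hR0 : 0 < R := zero_lt_one.trans_le (le_max_right _ _)
  have hε : 0 < γ / (2 * R) := by positivity
  have hdecay : ∀ᶠ n : ℕ in atTop, Real.exp (-(n * (γ / (2 * R)))) < 1 - c - t := by
    have hδ : 0 < 1 - c - t := by linarith [htc.trans_le (min_le_right _ _)]
    exact (Real.tendsto_exp_neg_atTop_nhds_zero.comp
      (tendsto_natCast_atTop_atTop.atTop_mul_const hε)).eventually (gt_mem_nhds hδ)
  obtain ⟨n, hsparse_n, hgood_n, hR_n, hdecay_n, hn⟩ := (hfreq.and_eventually
    ((hgood _ hε).and ((hR 1 one_pos).and (hdecay.and (eventually_ge_atTop 1))))).exists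
  have hc' : ∑ ω, μ n ω * #{p : Fin n × Fin (m n) | A n ω p.1 p.2 ≠ 0} ≤ c * (n * m n) := by
    rwa [div_le_iff₀ (mul_pos (by exact_mod_cast hn) (by exact_mod_cast hm n))] at hsparse_n
  have key := one_sub_sub_le_of_alphaE_le (hm n) (μ n) (hμ0 n) (hμ1 n) (A n) ht ht1 hc'
    ⟨0, hn⟩ (Real.exp_pos _).le fun y => hgood_n _ (Pi.single_ne_zero_iff.2 one_ne_zero) y
  have hexponent := exp_mul_mul_exp_neg_le (by exact_mod_cast hm n) hR0 hγ.le
    (hR_n.trans (le_max_left _ 1))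
  linarith
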